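/- arXiv:1907.07839 — 2 statements merged into one kernel-verified Lean document; each statement's English description precedes it below -/
import Mathlib

section
/- Let q be odd and A ∈ M_{d×d}(K_∞) a symmetric matrix, where K_∞ = F_q((1/t)). Then there exists γ ∈ GL_d(O_∞), where O_∞ = {x ∈ K_∞ : |x| ≤ 1}, such that γ^T A γ is a diagonal matrix. -/
/-!
Common setup: `K_∞ = 𝔽_q((1/t))` is modeled as `LaurentSeries Fq` in the variable `X = 1/t`,
so that an element `Σ_{i ≤ N} a_i t^i` of `K_∞` corresponds to the Hahn series
`Σ_{n ≥ -N} a_{-n} X^n`.  The degree in `t` is the negative of the Hahn-series order,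
the absolute value is `|α| = q^{deg_t α}`, and the standard additive character is
`ψ(α) = e_q(coefficient of t^{-1}) = e_q(coefficient of X^1)`.
-/

open scoped BigOperators Classical
noncomputable section



namespace FF

variable {Fq : Type*} [Field Fq] [Fintype Fq]

/-- The element `t = X⁻¹` of `K_∞`. -/
def tK : LaurentSeries Fq := HahnSeries.single (-1 : ℤ) 1

/-- Degree in `t` of a Laurent series (degree of `0` is `0` by convention). -/
def tdeg (α : LaurentSeries Fq) : ℤ := -α.order

/-- The absolute value `|α| = q^{deg_t α}` on `K_∞`, with `|0| = 0`. -/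
def absv (α : LaurentSeries Fq) : ℝ :=
  if α = 0 then 0 else (Fintype.card Fq : ℝ) ^ (-α.order)

/-- The embedding `𝔽_q[t] → K_∞`. -/
def toK (p : Polynomial Fq) : LaurentSeries Fq := Polynomial.eval₂ HahnSeries.C tK p

/-- The standard additive character `ψ` of `K_∞` attached to a character `e` of `𝔽_q`. -/
def psi (e : AddChar Fq ℂ) (α : LaurentSeries Fq) : ℂ := e (α.coeff 1)

/-- The polynomial `Σ_{i<N} c_i t^i` attached to a coefficient tuple. -/
def polyOf {N : ℕ} (c : Fin N → Fq) : Polynomial Fq :=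
  ∑ i : Fin N, Polynomial.C (c i) * Polynomial.X ^ (i : ℕ)

/-- Absolute value of a polynomial: `|p| = q^{deg p}`, `|0| = 0`. -/
def absP (p : Polynomial Fq) : ℝ :=
  if p = 0 then 0 else (Fintype.card Fq : ℝ) ^ p.natDegree

/-- The part `((γ))` of `γ` supported in strictly negative `t`-degrees. -/
def fracPart (γ : LaurentSeries Fq) : LaurentSeries Fq where
  coeff n := if 1 ≤ n then γ.coeff n else 0
  isPWO_support' := γ.isPWO_support'.mono (fun n hn => by
    by_cases h : (1 : ℤ) ≤ n <;> simp_all [Function.support])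

/-- A canonical choice of inverse of `x` modulo `c` (junk value `0` if not coprime). -/
def modInv (x c : Polynomial Fq) : Polynomial Fq :=
  if h : IsCoprime x c then h.choose else 0

/-- Riemann sums approximating the Haar integral (normalized by `μ(𝕋) = 1`) of `w`
over the ball `{|α| < q^Y}`, at resolution `M`: the ball is partitioned into `q^M`
sub-balls of measure `q^{Y-M}` with representatives `Σ_{0 ≤ j < M} c_j t^{Y-1-j}`. -/
def ballSum (Y : ℤ) (M : ℕ) (w : LaurentSeries Fq → ℂ) : ℂ :=
  ((Fintype.card Fq : ℂ) ^ Y * ((Fintype.card Fq : ℂ) ^ M)⁻¹) *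
    ∑ c : Fin M → Fq, w (∑ j : Fin M, HahnSeries.single ((1 : ℤ) - Y + (j : ℕ)) (c j))

/-- Riemann sums approximating the Haar integral of `w` over `𝕋^d` at resolution `M`. -/
def cubeSum (d M : ℕ) (w : (Fin d → LaurentSeries Fq) → ℂ) : ℂ :=
  (((Fintype.card Fq : ℂ) ^ (d * M))⁻¹) *
    ∑ c : Fin d → Fin M → Fq,
      w (fun i => ∑ j : Fin M, HahnSeries.single (((j : ℕ) : ℤ) + 1) (c i j))

end FF

/-!
Induction on the size of `A`. Let `a = A i j` be an entry of maximal absolute value. If `i ≠ j`,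
the transvections `e_i ↦ e_i ± e_j` replace `A i i` by `A i i ± 2a + A j j`; these differ by `4a`
and `|4| = 1` as `q` is odd, so one of them has absolute value `|a|`. Conjugating by a matrix over
`O_∞` does not increase the largest absolute value of an entry, so we may assume that it is attained
at a diagonal entry `A p p`. Then all `A p j / A p p` lie in `O_∞`, and the column operations
`e_j ↦ e_j - (A p j / A p p) e_p` clear row and column `p`, leaving the complementary block to the
induction hypothesis.
-/

namespace FF

open Matrix

variable {Fq : Type*} [Field Fq] [Fintype Fq]

lemma absv_nonneg (x : LaurentSeries Fq) : 0 ≤ absv x := by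
  unfold absv; split_ifs <;> positivity

@[simp] lemma absv_zero : absv (0 : LaurentSeries Fq) = 0 := if_pos rfl

lemma absv_of_ne_zero {x : LaurentSeries Fq} (hx : x ≠ 0) :
    absv x = (Fintype.card Fq : ℝ) ^ (-x.order) :=
  if_neg hx

lemma absv_pos {x : LaurentSeries Fq} (hx : x ≠ 0) : 0 < absv x := by
  rw [absv_of_ne_zero hx]; positivity

lemma absv_C {a : Fq} (ha : a ≠ 0) : absv (HahnSeries.C a : LaurentSeries Fq) = 1 := by
  rw [absv_of_ne_zero (HahnSeries.C_ne_zero ha), HahnSeries.order_C, neg_zero, zpow_zero]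

@[simp] lemma absv_one : absv (1 : LaurentSeries Fq) = 1 := by
  simpa using absv_C (one_ne_zero (α := Fq))

lemma absv_mul (x y : LaurentSeries Fq) : absv (x * y) = absv x * absv y := by
  by_cases hx : x = 0; · simp [hx]
  by_cases hy : y = 0; · simp [hy]
  rw [absv_of_ne_zero hx, absv_of_ne_zero hy, absv_of_ne_zero (mul_ne_zero hx hy),
    HahnSeries.order_mul hx hy, neg_add, zpow_add₀ (by positivity)]

@[simp] lemma absv_neg (x : LaurentSeries Fq) : absv (-x) = absv x := by
  unfold absv; simp only [neg_eq_zero, HahnSeries.order_neg]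

lemma absv_add_le_max (x y : LaurentSeries Fq) : absv (x + y) ≤ max (absv x) (absv y) := by
  by_cases hx : x = 0; · simp [hx]
  by_cases hy : y = 0; · simp [hy]
  by_cases hxy : x + y = 0; · simp [hxy, absv_nonneg]
  have hq : (1 : ℝ) ≤ Fintype.card Fq := by exact_mod_cast Fintype.card_pos
  rw [absv_of_ne_zero hx, absv_of_ne_zero hy, absv_of_ne_zero hxy,
    ← (zpow_right_mono₀ hq).map_max, max_neg_neg]
  exact zpow_le_zpow_right₀ hq (neg_le_neg (HahnSeries.min_order_le_order_add hxy))

lemma absv_sub_le_max (x y : LaurentSeries Fq) : absv (x - y) ≤ max (absv x) (absv y) := by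
  simpa [sub_eq_add_neg] using absv_add_le_max x (-y)

lemma absv_sum_le {ι : Type*} (s : Finset ι) {f : ι → LaurentSeries Fq} {b : ℝ} (hb : 0 ≤ b)
    (hf : ∀ i ∈ s, absv (f i) ≤ b) : absv (∑ i ∈ s, f i) ≤ b :=
  Finset.sum_induction f (fun x => absv x ≤ b)
    (fun _ _ hx hy => (absv_add_le_max _ _).trans (max_le hx hy)) (by simpa using hb) hf

lemma absv_div_le_one {x y : LaurentSeries Fq} (hy : y ≠ 0) (h : absv x ≤ absv y) :
    absv (x / y) ≤ 1 := by
  refine le_of_mul_le_mul_right ?_ (absv_pos hy)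
  rwa [← absv_mul, div_mul_cancel₀ x hy, one_mul]

lemma two_ne_zero_of_odd_card (hq : Odd (Fintype.card Fq)) : (2 : Fq) ≠ 0 :=
  Ring.two_ne_zero fun h => by
    have := FiniteField.even_card_iff_char_two.mp h
    rw [Nat.odd_iff] at hq; omega

lemma absv_two (h2 : (2 : Fq) ≠ 0) : absv (2 : LaurentSeries Fq) = 1 := by
  rw [← map_ofNat (HahnSeries.C (R := Fq) (Γ := ℤ)) 2, absv_C h2]

def IsIntegralMatrix {m o : Type*} (γ : Matrix m o (LaurentSeries Fq)) : Prop :=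
  ∀ i j, absv (γ i j) ≤ 1

lemma absv_mul_apply_le {l m o : Type*} [Fintype m] {M : Matrix l m (LaurentSeries Fq)}
    {N : Matrix m o (LaurentSeries Fq)} {a b : ℝ} (ha : 0 ≤ a) (hb : 0 ≤ b)
    (hM : ∀ i k, absv (M i k) ≤ a) (hN : ∀ k j, absv (N k j) ≤ b) (i : l) (j : o) :
    absv ((M * N) i j) ≤ a * b :=
  absv_sum_le _ (mul_nonneg ha hb) fun k _ => by
    rw [absv_mul]; exact mul_le_mul (hM i k) (hN k j) (absv_nonneg _) ha

namespace IsIntegralMatrix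

variable {m o : Type*}

lemma add {γ δ : Matrix m o (LaurentSeries Fq)} (hγ : IsIntegralMatrix γ)
    (hδ : IsIntegralMatrix δ) : IsIntegralMatrix (γ + δ) :=
  fun i j => (absv_add_le_max _ _).trans (max_le (hγ i j) (hδ i j))

lemma mul {l : Type*} [Fintype m] {γ : Matrix l m (LaurentSeries Fq)}
    {δ : Matrix m o (LaurentSeries Fq)} (hγ : IsIntegralMatrix γ) (hδ : IsIntegralMatrix δ) :
    IsIntegralMatrix (γ * δ) := by
  simpa [IsIntegralMatrix] using absv_mul_apply_le zero_le_one zero_le_one hγ hδ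

end IsIntegralMatrix

lemma isIntegralMatrix_vecMulVec {m o : Type*} {u : m → LaurentSeries Fq}
    {v : o → LaurentSeries Fq} (hu : ∀ i, absv (u i) ≤ 1) (hv : ∀ j, absv (v j) ≤ 1) :
    IsIntegralMatrix (vecMulVec u v) := fun i j => by
  rw [vecMulVec_apply, absv_mul]; exact mul_le_one₀ (hu i) (absv_nonneg _) (hv j)

lemma absv_conj_apply_le {n : Type*} [Fintype n] {γ A : Matrix n n (LaurentSeries Fq)} {b : ℝ}
    (hb : 0 ≤ b) (hγ : IsIntegralMatrix γ) (hA : ∀ i j, absv (A i j) ≤ b) (i j : n) :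
    absv ((γᵀ * A * γ) i j) ≤ b := by
  simpa using absv_mul_apply_le (mul_nonneg zero_le_one hb) zero_le_one
    (absv_mul_apply_le (M := γᵀ) zero_le_one hb (fun i k => hγ k i) hA) hγ i j

lemma isSymm_transpose_mul_mul {R : Type*} [CommRing R] {m n : Type*} [Fintype n]
    {A : Matrix n n R} (hA : A.IsSymm) (γ : Matrix n m R) : (γᵀ * A * γ).IsSymm := by
  simp only [IsSymm, transpose_mul, transpose_transpose, hA.eq, Matrix.mul_assoc]

lemma conj_mul {R : Type*} [CommRing R] {n : Type*} [Fintype n] (A γ δ : Matrix n n R) :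
    (γ * δ)ᵀ * A * (γ * δ) = δᵀ * (γᵀ * A * γ) * δ := by
  simp only [transpose_mul, Matrix.mul_assoc]

lemma submatrix_conj {R : Type*} [CommRing R] {m n : Type*} [Fintype m] [Fintype n]
    (e : m ≃ n) (A γ : Matrix n n R) :
    (γ.submatrix e e)ᵀ * A.submatrix e e * γ.submatrix e e = (γᵀ * A * γ).submatrix e e := by
  simp only [transpose_submatrix, submatrix_mul_equiv]

section

variable {n : Type*} [DecidableEq n]

lemma isIntegralMatrix_one : IsIntegralMatrix (1 : Matrix n n (LaurentSeries Fq)) := by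
  intro i j; rw [one_apply]; split_ifs <;> simp

lemma isIntegralMatrix_single {m : Type*} [DecidableEq m] (i : n) (j : m)
    {c : LaurentSeries Fq} (hc : absv c ≤ 1) : IsIntegralMatrix (single i j c) := by
  intro k l; rw [single_apply]; split_ifs <;> simp [hc]

variable [Fintype n]

def IsUnimodular (γ : Matrix n n (LaurentSeries Fq)) : Prop :=
  IsIntegralMatrix γ ∧ absv γ.det = 1

lemma isUnimodular_one : IsUnimodular (1 : Matrix n n (LaurentSeries Fq)) :=
  ⟨isIntegralMatrix_one, by simp⟩

lemma IsUnimodular.mul {γ δ : Matrix n n (LaurentSeries Fq)} (hγ : IsUnimodular γ)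
    (hδ : IsUnimodular δ) : IsUnimodular (γ * δ) :=
  ⟨hγ.1.mul hδ.1, by rw [det_mul, absv_mul, hγ.2, hδ.2, one_mul]⟩

lemma IsUnimodular.submatrix {m : Type*} [Fintype m] [DecidableEq m]
    {γ : Matrix n n (LaurentSeries Fq)} (hγ : IsUnimodular γ) (e : m ≃ n) :
    IsUnimodular (γ.submatrix e e) :=
  ⟨fun i j => hγ.1 (e i) (e j), by rw [det_submatrix_equiv_self, hγ.2]⟩

lemma IsUnimodular.fromBlocks_one {m : Type*} [Fintype m] [DecidableEq m]
    {δ : Matrix n n (LaurentSeries Fq)} (hδ : IsUnimodular δ) :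
    IsUnimodular (fromBlocks (1 : Matrix m m (LaurentSeries Fq)) 0 0 δ) := by
  refine ⟨?_, by rw [det_fromBlocks_zero₂₁, det_one, one_mul, hδ.2]⟩
  rintro (i | i) (j | j)
  exacts [isIntegralMatrix_one i j, by simp, by simp, hδ.1 i j]

lemma isUnimodular_transvection {i j : n} (hij : i ≠ j) {c : LaurentSeries Fq}
    (hc : absv c ≤ 1) : IsUnimodular (transvection i j c) :=
  ⟨isIntegralMatrix_one.add (isIntegralMatrix_single i j hc), by simp [hij]⟩

lemma isUnimodular_one_add_vecMulVec {u v : n → LaurentSeries Fq}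
    (hu : ∀ i, absv (u i) ≤ 1) (hv : ∀ j, absv (v j) ≤ 1) (huv : v ⬝ᵥ u = 0) :
    IsUnimodular (1 + vecMulVec u v) :=
  ⟨isIntegralMatrix_one.add (isIntegralMatrix_vecMulVec hu hv), by
    rw [vecMulVec_eq Unit, det_one_add_replicateCol_mul_replicateRow, huv, add_zero, absv_one]⟩

lemma transvection_conj_apply_self {R : Type*} [CommRing R] {A : Matrix n n R} (hA : A.IsSymm)
    (i j : n) (c : R) :
    ((transvection j i c)ᵀ * A * transvection j i c) i i =
      A i i + 2 * c * A i j + c ^ 2 * A j j := by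
  simp only [transvection, transpose_add, transpose_one, transpose_single, Matrix.add_mul, one_mul,
    Matrix.mul_add, mul_one, single_mul_mul_single, Matrix.add_apply, single_mul_apply_same,
    mul_single_apply_same, single_apply_same, hA.apply i j]
  ring

lemma exists_absv_le_transvection_conj_apply (h2 : (2 : Fq) ≠ 0)
    {A : Matrix n n (LaurentSeries Fq)} (hA : A.IsSymm) (i j : n) :
    ∃ c : LaurentSeries Fq, absv c ≤ 1 ∧
      absv (A i j) ≤ absv (((transvection j i c)ᵀ * A * transvection j i c) i i) := by
  simp_rw [transvection_conj_apply_self hA]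
  set f := fun c : LaurentSeries Fq => A i i + 2 * c * A i j + c ^ 2 * A j j
  have hdiff : absv (f 1 - f (-1)) = absv (A i j) := by
    rw [show f 1 - f (-1) = 2 * (2 * A i j) by simp only [f]; ring,
      absv_mul, absv_mul, absv_two h2, one_mul, one_mul]
  rcases le_max_iff.mp (hdiff ▸ absv_sub_le_max (f 1) (f (-1))) with h | h
  · exact ⟨1, by simp, h⟩
  · exact ⟨-1, by simp, h⟩

lemma exists_isUnimodular_conj_pivot (h2 : (2 : Fq) ≠ 0) {A : Matrix n n (LaurentSeries Fq)}
    (hA : A.IsSymm) (hA0 : A ≠ 0) :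
    ∃ (τ : Matrix n n (LaurentSeries Fq)) (p : n), IsUnimodular τ ∧ (τᵀ * A * τ) p p ≠ 0 ∧
      ∀ i j, absv ((τᵀ * A * τ) i j) ≤ absv ((τᵀ * A * τ) p p) := by
  obtain ⟨k, l, hkl⟩ : ∃ k l, A k l ≠ 0 := by
    by_contra! h; exact hA0 (Matrix.ext h)
  have : Nonempty n := ⟨k⟩
  obtain ⟨⟨i, j⟩, hmax⟩ := Finite.exists_max fun ij : n × n => absv (A ij.1 ij.2)
  have hm : 0 < absv (A i j) := (absv_pos hkl).trans_le (hmax (k, l))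
  obtain ⟨τ, hτ, hτA⟩ : ∃ τ : Matrix n n (LaurentSeries Fq),
      IsUnimodular τ ∧ absv (A i j) ≤ absv ((τᵀ * A * τ) i i) := by
    by_cases hij : i = j
    · exact ⟨1, isUnimodular_one, by simp [hij]⟩
    · obtain ⟨c, hc, hcA⟩ := exists_absv_le_transvection_conj_apply h2 hA i j
      exact ⟨_, isUnimodular_transvection (Ne.symm hij) hc, hcA⟩
  refine ⟨τ, i, hτ, fun h => ?_, fun k l => ?_⟩
  · rw [h, absv_zero] at hτA; linarith
  · exact (absv_conj_apply_le hm.le hτ.1 (fun k l => hmax (k, l)) k l).trans hτA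

lemma exists_isUnimodular_clear_row {B : Matrix n n (LaurentSeries Fq)} {p : n}
    (hp : B p p ≠ 0) (hmax : ∀ j, absv (B p j) ≤ absv (B p p)) :
    ∃ γ : Matrix n n (LaurentSeries Fq), IsUnimodular γ ∧ ∀ j, j ≠ p → (γᵀ * B * γ) p j = 0 := by
  set v : n → LaurentSeries Fq := Pi.single p 1 - fun j => B p j / B p p
  have hsingle : ∀ j, absv ((Pi.single p 1 : n → LaurentSeries Fq) j) ≤ 1 := fun j => by
    rw [Pi.single_apply]; split_ifs <;> simp
  have hv : ∀ j, absv (v j) ≤ 1 := fun j =>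
    (absv_sub_le_max _ _).trans (max_le (hsingle j) (absv_div_le_one hp (hmax j)))
  refine ⟨1 + vecMulVec (Pi.single p 1) v,
    isUnimodular_one_add_vecMulVec hsingle hv (by simp [v, div_self hp]), fun j hj => ?_⟩
  simp [v, transpose_add, transpose_vecMulVec, add_mul, mul_add, vecMulVec_mul, mul_vecMulVec,
    vecMulVec_apply, mul_div_cancel₀ _ hp, div_self hp, hj]

lemma exists_isUnimodular_isDiag_of_row_eq_zero {B : Matrix n n (LaurentSeries Fq)}
    (hB : B.IsSymm) {p : n} (hrow : ∀ j, j ≠ p → B p j = 0)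
    {δ : Matrix {j // j ≠ p} {j // j ≠ p} (LaurentSeries Fq)} (hδ : IsUnimodular δ)
    (hdiag : (δᵀ * B.submatrix (Subtype.val : {j // j ≠ p} → n) Subtype.val * δ).IsDiag) :
    ∃ γ : Matrix n n (LaurentSeries Fq), IsUnimodular γ ∧ (γᵀ * B * γ).IsDiag := by
  let e := Equiv.sumCompl fun j => j = p
  let G := fromBlocks (1 : Matrix {j // j = p} {j // j = p} (LaurentSeries Fq)) 0 0 δ
  refine ⟨G.submatrix e.symm e.symm, hδ.fromBlocks_one.submatrix e.symm, ?_⟩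
  have hblocks :
      B.submatrix e e = fromBlocks (B.submatrix (↑) (↑)) 0 0 (B.submatrix (↑) (↑)) := by
    refine Matrix.ext ?_
    rintro (i | i) (j | j)
    · rfl
    · change B i j = 0
      rw [i.2]; exact hrow j j.2
    · change B i j = 0
      rw [j.2, hB.apply]; exact hrow i i.2
    · rfl
  have hconj : Gᵀ * B.submatrix e e * G =
      fromBlocks (B.submatrix (↑) (↑)) 0 0 (δᵀ * B.submatrix (↑) (↑) * δ) := by
    simp [G, hblocks, fromBlocks_transpose, fromBlocks_multiply]
  rw [← submatrix_id_id B, ← e.self_comp_symm, ← submatrix_submatrix, submatrix_conj, hconj]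
  exact (IsDiag.fromBlocks (fun i j h => (h (Subsingleton.elim i j)).elim) hdiag).submatrix
    e.symm.injective

lemma exists_isUnimodular_conj_row_eq_zero (h2 : (2 : Fq) ≠ 0) [Nonempty n]
    {A : Matrix n n (LaurentSeries Fq)} (hA : A.IsSymm) :
    ∃ (γ : Matrix n n (LaurentSeries Fq)) (p : n), IsUnimodular γ ∧
      ∀ j, j ≠ p → (γᵀ * A * γ) p j = 0 := by
  by_cases hA0 : A = 0
  · exact ⟨1, Classical.arbitrary n, isUnimodular_one, fun j _ => by simp [hA0]⟩
  obtain ⟨τ, p, hτ, hp, hmax⟩ := exists_isUnimodular_conj_pivot h2 hA hA0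
  obtain ⟨γ, hγ, hrow⟩ := exists_isUnimodular_clear_row hp fun j => hmax p j
  exact ⟨τ * γ, p, hτ.mul hγ, by rwa [conj_mul]⟩

end

theorem exists_isUnimodular_conj_isDiag (h2 : (2 : Fq) ≠ 0) {n : Type*} [Fintype n]
    [DecidableEq n] {A : Matrix n n (LaurentSeries Fq)} (hA : A.IsSymm) :
    ∃ γ : Matrix n n (LaurentSeries Fq), IsUnimodular γ ∧ (γᵀ * A * γ).IsDiag := by
  revert A
  refine Finite.induction_subsingleton_or_nontrivial (P := fun n => ∀ [Fintype n] [DecidableEq n]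
    {A : Matrix n n (LaurentSeries Fq)}, A.IsSymm →
      ∃ γ : Matrix n n (LaurentSeries Fq), IsUnimodular γ ∧ (γᵀ * A * γ).IsDiag) n ?_ ?_
  · intro n _ _ _ _ _ _
    exact ⟨1, isUnimodular_one, fun i j h => (h (Subsingleton.elim i j)).elim⟩
  · intro n _ _ ih _ _ A hA
    obtain ⟨γ, p, hγ, hrow⟩ := exists_isUnimodular_conj_row_eq_zero h2 hA
    have hB : (γᵀ * A * γ).IsSymm := isSymm_transpose_mul_mul hA γ
    obtain ⟨δ, hδ, hdiag⟩ := ih {j // j ≠ p} (Finite.card_subtype_lt (x := p) (by simp))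
      (hB.submatrix Subtype.val)
    obtain ⟨γ', hγ', hdiag'⟩ := exists_isUnimodular_isDiag_of_row_eq_zero hB hrow hδ hdiag
    exact ⟨γ * γ', hγ.mul hγ', by rwa [conj_mul]⟩

end FF

open FF in
/-- diagonalization over `O_∞`.  Let `q` be odd and `A` a symmetric
`d × d` matrix over `K_∞ = 𝔽_q((1/t))`.  Then there is `γ ∈ GL_d(O_∞)` — i.e. a matrix with
entries in the valuation ring `O_∞ = {|x| ≤ 1}` and `|det γ| = 1` — with `γᵀ A γ` diagonal. -/
theorem diagonalize_over_Oinfty {Fq : Type*} [Field Fq] [Fintype Fq]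
    (hq : Odd (Fintype.card Fq)) {d : ℕ}
    (A : Matrix (Fin d) (Fin d) (LaurentSeries Fq)) (hA : A.IsSymm) :
    ∃ γ : Matrix (Fin d) (Fin d) (LaurentSeries Fq),
      (∀ i j, absv (γ i j) ≤ 1) ∧ absv γ.det = 1 ∧
        (γ.transpose * A * γ).IsDiag := by
  obtain ⟨γ, ⟨hint, hdet⟩, hdiag⟩ :=
    exists_isUnimodular_conj_isDiag (two_ne_zero_of_odd_card hq) hA
  exact ⟨γ, hint, hdet, hdiag⟩
end
end

section
/- Let F(x) = x^T A x be a quadratic form over F_q[t], g, k ∈ F_q[t], λ ∈ F_q[t]^d, and define S_{g,r}(a,ℓ,c) = Σ_{b ∈ (F_q[t]/(gr))^d} ψ( ((a+rℓ)(2λ^T A b − k) + ag F(b) − ⟨c,b⟩)/(gr) ). Then S_{g,r}(a,ℓ,c) = 0 unless c ≡ 2(a+rℓ) A λ (mod g). Consequently the full sum S_{g,r}(c) = Σ_{|ℓ|<|g|} Σ*_{|a|<|r|} S_{g,r}(a,ℓ,c) vanishes unless c ≡ α A λ (mod g) for some α ∈ F_q[t]. -/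
/-!
Common setup: `K_∞ = 𝔽_q((1/t))` is modeled as `LaurentSeries Fq` in the variable `X = 1/t`,
so that an element `Σ_{i ≤ N} a_i t^i` of `K_∞` corresponds to the Hahn series
`Σ_{n ≥ -N} a_{-n} X^n`.  The degree in `t` is the negative of the Hahn-series order,
the absolute value is `|α| = q^{deg_t α}`, and the standard additive character is
`ψ(α) = e_q(coefficient of t^{-1}) = e_q(coefficient of X^1)`.
-/

open scoped BigOperators Classical
noncomputable section



namespace FF
variable {Fq : Type*} [Field Fq] [Fintype Fq]

/-- The exponential sum
`S_{g,r}(a,ℓ,c) = Σ_{b mod gr} ψ(((a+rℓ)(2λᵀAb − k) + agF(b) − ⟨c,b⟩)/(gr))`,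
with residues `b` modulo `gr` enumerated coordinatewise by coefficient tuples. -/
def Sterm {d : ℕ} (e : AddChar Fq ℂ) (A : Matrix (Fin d) (Fin d) (Polynomial Fq))
    (g r k : Polynomial Fq) (lam : Fin d → Polynomial Fq)
    (a ℓ : Polynomial Fq) (c : Fin d → Polynomial Fq) : ℂ :=
  ∑ b : Fin d → Fin (g * r).natDegree → Fq,
    psi e (toK ((a + r * ℓ) * (2 * (∑ i, ∑ j, lam i * A i j * polyOf (b j)) - k) +
        a * g * (∑ i, ∑ j, polyOf (b i) * A i j * polyOf (b j)) -
        ∑ i, c i * polyOf (b i)) / toK (g * r))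

/-- The full exponential sum `S_{g,r}(c) = Σ_{|ℓ|<|g|} Σ*_{|a|<|r|} S_{g,r}(a,ℓ,c)`. -/
def Sfull {d : ℕ} (e : AddChar Fq ℂ) (A : Matrix (Fin d) (Fin d) (Polynomial Fq))
    (g r k : Polynomial Fq) (lam : Fin d → Polynomial Fq)
    (c : Fin d → Polynomial Fq) : ℂ :=
  ∑ ℓ : Fin g.natDegree → Fq, ∑ a : Fin r.natDegree → Fq,
    if IsCoprime (polyOf a) r then Sterm e A g r k lam (polyOf a) (polyOf ℓ) c else 0

end FF

/-!
Parametrize the residues modulo `g r` by coefficient tuples `b`. The translation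
`b ↦ b + r u` permutes them, and since `A` is symmetric it changes the phase by
`r ⟨m, u⟩` plus a multiple of `g r`, where `m = 2(a + rℓ)Aλ − c`; so the summand is multiplied
by `ψ(⟨m, u⟩/g)`. If `g ∤ mᵢ`, the residue pairing `(x, y) ↦ ψ(x y/g)` on `𝔽_q[t]/(g)` is
nondegenerate, so some `u = w eᵢ` gives a factor `≠ 1` and `S = ψ(mᵢ w/g) S` forces `S = 0`.
The full sum consists of such terms with `α = 2(a + rℓ)`.
-/

namespace FF

open Polynomial

variable {Fq : Type*} [Field Fq]

lemma toK_add (p q : Fq[X]) : toK (p + q) = toK p + toK q := eval₂_add _ _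

lemma toK_mul (p q : Fq[X]) : toK (p * q) = toK p * toK q := eval₂_mul _ _

lemma toK_monomial (n : ℕ) (a : Fq) : toK (monomial n a) = HahnSeries.single (-(n : ℤ)) a := by
  rw [toK, eval₂_monomial, tK, HahnSeries.single_pow, HahnSeries.C_apply,
    HahnSeries.single_mul_single]
  simp

lemma coeff_toK_neg_natCast (p : Fq[X]) (n : ℕ) : (toK p).coeff (-(n : ℤ)) = p.coeff n := by
  induction p using Polynomial.induction_on' with
  | add p q hp hq => simp [toK_add, hp, hq]
  | monomial m a => simp [toK_monomial, HahnSeries.coeff_single, coeff_monomial, eq_comm]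

lemma coeff_toK_of_pos (p : Fq[X]) {n : ℤ} (hn : 0 < n) : (toK p).coeff n = 0 := by
  induction p using Polynomial.induction_on' with
  | add p q hp hq => simp [toK_add, hp, hq]
  | monomial m a => simp [toK_monomial, HahnSeries.coeff_single]; omega

lemma toK_ne_zero {p : Fq[X]} (hp : p ≠ 0) : toK p ≠ 0 := by
  intro h
  have := coeff_toK_neg_natCast p p.natDegree
  rw [h, HahnSeries.coeff_zero] at this
  exact leadingCoeff_ne_zero.mpr hp this.symm

lemma order_toK {p : Fq[X]} (hp : p ≠ 0) : (toK p).order = -(p.natDegree : ℤ) := by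
  refine le_antisymm (HahnSeries.order_le_of_coeff_ne_zero ?_)
    ((HahnSeries.le_order_iff_forall (toK_ne_zero hp)).mpr fun j hj => ?_)
  · rw [coeff_toK_neg_natCast]
    exact leadingCoeff_ne_zero.mpr hp
  · obtain hj0 | hj0 := lt_or_ge 0 j
    · exact coeff_toK_of_pos p hj0
    · obtain ⟨n, rfl⟩ : ∃ n : ℕ, j = -(n : ℤ) := ⟨(-j).toNat, by omega⟩
      rw [coeff_toK_neg_natCast]
      exact coeff_eq_zero_of_natDegree_lt (by omega)

lemma leadingCoeff_toK {p : Fq[X]} (hp : p ≠ 0) : (toK p).leadingCoeff = p.leadingCoeff := by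
  rw [HahnSeries.leadingCoeff_eq, order_toK hp, coeff_toK_neg_natCast]
  rfl

lemma coeff_one_toK_div_toK {p g : Fq[X]} (hp : p ≠ 0) (hg : g ≠ 0)
    (hpg : p.natDegree + 1 = g.natDegree) :
    (toK p / toK g).coeff 1 = p.leadingCoeff / g.leadingCoeff := by
  set h := toK p / toK g
  have hgh : toK g * h = toK p := mul_div_cancel₀ _ (toK_ne_zero hg)
  have hh : h ≠ 0 := by
    rintro h0
    rw [h0, mul_zero] at hgh
    exact toK_ne_zero hp hgh.symm
  have horder : h.order = 1 := by
    have := HahnSeries.order_mul (toK_ne_zero hg) hh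
    rw [hgh, order_toK hp, order_toK hg] at this
    omega
  have hlead := HahnSeries.leadingCoeff_mul (toK g) h
  rw [hgh, leadingCoeff_toK hp, leadingCoeff_toK hg, HahnSeries.leadingCoeff_eq, horder] at hlead
  rw [hlead, mul_div_cancel_left₀ _ (leadingCoeff_ne_zero.mpr hg)]

def psiDiv (e : AddChar Fq ℂ) (D : Fq[X]) : AddChar Fq[X] ℂ where
  toFun x := psi e (toK x / toK D)
  map_zero_eq_one' := by simp [psi, toK]
  map_add_eq_mul' x y := by
    simp only [psi, toK_add, add_div, HahnSeries.coeff_add, e.map_add_eq_mul]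

lemma psiDiv_apply (e : AddChar Fq ℂ) (D x : Fq[X]) : psiDiv e D x = psi e (toK x / toK D) := rfl

lemma psiDiv_self_mul (e : AddChar Fq ℂ) (D x : Fq[X]) : psiDiv e D (D * x) = 1 := by
  obtain rfl | hD := eq_or_ne D 0
  · simp
  · rw [psiDiv_apply, psi, toK_mul, mul_div_cancel_left₀ _ (toK_ne_zero hD),
      coeff_toK_of_pos _ one_pos, e.map_zero_eq_one]

lemma psiDiv_mul_mul_right (e : AddChar Fq ℂ) (g : Fq[X]) {r : Fq[X]} (hr : r ≠ 0) (x : Fq[X]) :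
    psiDiv e (g * r) (r * x) = psiDiv e g x := by
  rw [psiDiv_apply, psiDiv_apply, toK_mul, toK_mul, mul_comm (toK r),
    mul_div_mul_right _ _ (toK_ne_zero hr)]

lemma exists_psiDiv_mul_ne_one {e : AddChar Fq ℂ} (he : e ≠ 1) {g m : Fq[X]} (hg : g ≠ 0)
    (hm : ¬ g ∣ m) : ∃ w, psiDiv e g (m * w) ≠ 1 := by
  obtain ⟨x, hx⟩ := AddChar.ne_one_iff.mp he
  set m' := m % g
  have hm' : m' ≠ 0 := fun h => hm (EuclideanDomain.mod_eq_zero.mp h)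
  have hdeg : m'.natDegree < g.natDegree := natDegree_lt_natDegree hm' (degree_mod_lt m hg)
  have hlead : m'.leadingCoeff ≠ 0 := leadingCoeff_ne_zero.mpr hm'
  -- `m' w` has degree `deg g - 1`, so the `t⁻¹`-coefficient of `m' w / g` is
  -- `lc(m') s / lc(g) = x`.
  set s := x * g.leadingCoeff / m'.leadingCoeff
  have hs : s ≠ 0 :=
    div_ne_zero (mul_ne_zero (by rintro rfl; exact hx e.map_zero_eq_one)
      (leadingCoeff_ne_zero.mpr hg)) hlead
  set w := C s * X ^ (g.natDegree - 1 - m'.natDegree)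
  have hw : w ≠ 0 := mul_ne_zero (C_ne_zero.mpr hs) (pow_ne_zero _ X_ne_zero)
  refine ⟨w, ?_⟩
  rw [← EuclideanDomain.mod_add_div m g, add_mul, AddChar.map_add_eq_mul, mul_assoc,
    psiDiv_self_mul, mul_one, psiDiv_apply, psi, coeff_one_toK_div_toK (mul_ne_zero hm' hw) hg,
    leadingCoeff_mul, leadingCoeff_C_mul_X_pow]
  · rwa [mul_div_assoc', mul_div_cancel_left₀ _ hlead, mul_div_cancel_right₀ _
      (leadingCoeff_ne_zero.mpr hg)]
  · rw [natDegree_mul hm' hw, natDegree_C_mul_X_pow _ _ hs]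
    omega

lemma polyOf_eq_degreeLT_basis {N : ℕ} (c : Fin N → Fq) :
    polyOf c = ((degreeLT.basis Fq N).equivFun.symm c : Fq[X]) := by
  simp [polyOf, Module.Basis.equivFun_symm_apply, smul_eq_C_mul]

lemma degree_polyOf_lt {N : ℕ} (c : Fin N → Fq) : (polyOf c).degree < N := by
  rw [polyOf_eq_degreeLT_basis]
  exact mem_degreeLT.mp (Submodule.coe_mem _)

lemma polyOf_injective {N : ℕ} : Function.Injective (polyOf : (Fin N → Fq) → Fq[X]) := by
  intro c c' h
  simp_rw [polyOf_eq_degreeLT_basis] at h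
  exact (degreeLT.basis Fq N).equivFun.symm.injective (Subtype.ext h)

lemma polyOf_coeff {N : ℕ} {p : Fq[X]} (hp : p.degree < N) :
    polyOf (fun j : Fin N => p.coeff j) = p := by
  rw [polyOf_eq_degreeLT_basis]
  exact congrArg Subtype.val
    ((degreeLT.basis Fq N).equivFun.symm_apply_apply ⟨p, mem_degreeLT.mpr hp⟩)

lemma sum_polyOf_add_of_periodic [Fintype Fq] {ι : Type*} [Fintype ι] [DecidableEq ι]
    {D : Fq[X]} (hD : D ≠ 0) (f : (ι → Fq[X]) → ℂ) (hf : ∀ B W, f (B + D • W) = f B)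
    (Y : ι → Fq[X]) :
    ∑ b : ι → Fin D.natDegree → Fq, f ((fun i => polyOf (b i)) + Y) =
      ∑ b : ι → Fin D.natDegree → Fq, f (fun i => polyOf (b i)) := by
  have hlt : ∀ p : Fq[X], (p % D).degree < D.natDegree := fun p =>
    degree_eq_natDegree hD ▸ degree_mod_lt p hD
  set σ : (ι → Fin D.natDegree → Fq) → ι → Fin D.natDegree → Fq :=
    fun b i j => ((polyOf (b i) + Y i) % D).coeff j
  have hσ : ∀ b i, polyOf (σ b i) = (polyOf (b i) + Y i) % D := fun b i => polyOf_coeff (hlt _)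
  have hσ_inj : σ.Injective := by
    intro b b' h
    funext i
    have hmod := congrArg (fun b => polyOf (b i)) h
    simp only [hσ] at hmod
    have hdvd : D ∣ polyOf (b i) - polyOf (b' i) :=
      ⟨(polyOf (b i) + Y i) / D - (polyOf (b' i) + Y i) / D, by
        linear_combination -EuclideanDomain.mod_add_div (polyOf (b i) + Y i) D +
          EuclideanDomain.mod_add_div (polyOf (b' i) + Y i) D + hmod⟩
    refine polyOf_injective (sub_eq_zero.mp (eq_zero_of_dvd_of_degree_lt hdvd ?_))
    exact degree_eq_natDegree hD ▸
      (degree_sub_le _ _).trans_lt (max_lt (degree_polyOf_lt _) (degree_polyOf_lt _))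
  refine (Fintype.sum_congr _ _ fun b => ?_).trans
    ((Finite.injective_iff_bijective.mp hσ_inj).sum_comp fun b => f fun i => polyOf (b i))
  simp only [hσ]
  rw [← hf (fun i => (polyOf (b i) + Y i) % D) (fun i => (polyOf (b i) + Y i) / D)]
  congr 1
  funext i
  exact (EuclideanDomain.mod_add_div _ _).symm

section

variable {d : ℕ}

lemma sum_sum_mul_mul_of_isSymm {A : Matrix (Fin d) (Fin d) Fq[X]} (hA : A.IsSymm)
    (lam U : Fin d → Fq[X]) :
    ∑ i, ∑ j, lam i * A i j * U j = ∑ i, (∑ j, A i j * lam j) * U i := by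
  rw [Finset.sum_comm]
  refine Finset.sum_congr rfl fun i _ => ?_
  rw [Finset.sum_mul]
  refine Finset.sum_congr rfl fun j _ => ?_
  rw [← hA.apply i j]
  ring

variable (A : Matrix (Fin d) (Fin d) Fq[X]) (g r k : Fq[X]) (lam : Fin d → Fq[X]) (a ℓ : Fq[X])
  (c : Fin d → Fq[X])

def Sphase (B : Fin d → Fq[X]) : Fq[X] :=
  (a + r * ℓ) * (2 * (∑ i, ∑ j, lam i * A i j * B j) - k) +
    a * g * (∑ i, ∑ j, B i * A i j * B j) - ∑ i, c i * B i

lemma Sphase_add_smul (hA : A.IsSymm) (B U : Fin d → Fq[X]) :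
    ∃ Q, Sphase A g r k lam a ℓ c (B + r • U) = Sphase A g r k lam a ℓ c B +
      r * ∑ i, (2 * (a + r * ℓ) * (∑ j, A i j * lam j) - c i) * U i + g * r * Q := by
  refine ⟨a * ((∑ i, ∑ j, B i * A i j * U j) + (∑ i, ∑ j, U i * A i j * B j) +
    r * ∑ i, ∑ j, U i * A i j * U j), ?_⟩
  have hlin : ∑ i, ∑ j, lam i * A i j * (B j + r * U j) =
      (∑ i, ∑ j, lam i * A i j * B j) + r * ∑ i, (∑ j, A i j * lam j) * U i := by
    have h i j : lam i * A i j * (B j + r * U j) =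
        lam i * A i j * B j + r * (lam i * A i j * U j) := by ring
    simp only [h, Finset.sum_add_distrib, ← Finset.mul_sum, sum_sum_mul_mul_of_isSymm hA]
  have hquad : ∑ i, ∑ j, (B i + r * U i) * A i j * (B j + r * U j) =
      (∑ i, ∑ j, B i * A i j * B j) + r * ((∑ i, ∑ j, B i * A i j * U j) +
        (∑ i, ∑ j, U i * A i j * B j) + r * ∑ i, ∑ j, U i * A i j * U j) := by
    have h i j : (B i + r * U i) * A i j * (B j + r * U j) = B i * A i j * B j +
        (r * (B i * A i j * U j) + (r * (U i * A i j * B j) + r * (r * (U i * A i j * U j)))) := by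
      ring
    simp only [h, Finset.sum_add_distrib, ← Finset.mul_sum]
    ring
  have hc : ∑ i, c i * (B i + r * U i) = (∑ i, c i * B i) + r * ∑ i, c i * U i := by
    simp only [mul_add, Finset.sum_add_distrib, mul_left_comm _ r, ← Finset.mul_sum]
  have hm : ∑ i, (2 * (a + r * ℓ) * (∑ j, A i j * lam j) - c i) * U i =
      2 * (a + r * ℓ) * (∑ i, (∑ j, A i j * lam j) * U i) - ∑ i, c i * U i := by
    rw [Finset.mul_sum, ← Finset.sum_sub_distrib]
    exact Finset.sum_congr rfl fun i _ => by ring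
  simp only [Sphase, Pi.add_apply, Pi.smul_apply, smul_eq_mul, hlin, hquad, hc, hm]
  ring

lemma psiDiv_Sphase_add_smul (e : AddChar Fq ℂ) (hA : A.IsSymm) (hr : r ≠ 0)
    (B U : Fin d → Fq[X]) :
    psiDiv e (g * r) (Sphase A g r k lam a ℓ c (B + r • U)) =
      psiDiv e (g * r) (Sphase A g r k lam a ℓ c B) *
        psiDiv e g (∑ i, (2 * (a + r * ℓ) * (∑ j, A i j * lam j) - c i) * U i) := by
  obtain ⟨Q, hQ⟩ := Sphase_add_smul A g r k lam a ℓ c hA B U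
  rw [hQ, AddChar.map_add_eq_mul, AddChar.map_add_eq_mul, psiDiv_self_mul, mul_one,
    psiDiv_mul_mul_right e g hr]

lemma Sterm_eq_zero_of_not_dvd [Fintype Fq] {e : AddChar Fq ℂ} (he : e ≠ 1) (hA : A.IsSymm)
    (hg : g ≠ 0) (hr : r ≠ 0) {i₀ : Fin d}
    (hi₀ : ¬ g ∣ 2 * (a + r * ℓ) * (∑ j, A i₀ j * lam j) - c i₀) :
    Sterm e A g r k lam a ℓ c = 0 := by
  have hS : Sterm e A g r k lam a ℓ c = ∑ b : Fin d → Fin (g * r).natDegree → Fq,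
      psiDiv e (g * r) (Sphase A g r k lam a ℓ c fun i => polyOf (b i)) := rfl
  have hperiodic : ∀ B W, psiDiv e (g * r) (Sphase A g r k lam a ℓ c (B + (g * r) • W)) =
      psiDiv e (g * r) (Sphase A g r k lam a ℓ c B) := by
    intro B W
    rw [← smul_smul, smul_comm, psiDiv_Sphase_add_smul A g r k lam a ℓ c e hA hr]
    simp only [Pi.smul_apply, smul_eq_mul, mul_left_comm _ g, ← Finset.mul_sum, psiDiv_self_mul,
      mul_one]
  obtain ⟨w, hw⟩ := exists_psiDiv_mul_ne_one he hg hi₀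
  have hshift := sum_polyOf_add_of_periodic (mul_ne_zero hg hr)
    (fun B => psiDiv e (g * r) (Sphase A g r k lam a ℓ c B)) hperiodic (r • Pi.single i₀ w)
  simp only [psiDiv_Sphase_add_smul A g r k lam a ℓ c e hA hr, Pi.single_apply, mul_ite,
    mul_zero, Finset.sum_ite_eq', Finset.mem_univ, if_true, ← Finset.sum_mul] at hshift
  rw [← hS] at hshift
  by_contra hS0
  exact hw ((mul_eq_left₀ hS0).mp hshift)

end

end FF

open FF in
theorem Sterm_vanishing_general {Fq : Type*} [Field Fq] [Fintype Fq]
    (e : AddChar Fq ℂ) (he : e ≠ 1) {d : ℕ}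
    (A : Matrix (Fin d) (Fin d) (Polynomial Fq)) (hA : A.IsSymm)
    (g r k : Polynomial Fq) (hg : g ≠ 0) (hr : r ≠ 0)
    (lam : Fin d → Polynomial Fq) (c : Fin d → Polynomial Fq) :
    (∀ a ℓ : Polynomial Fq,
      ¬ (∀ i, g ∣ (c i - 2 * (a + r * ℓ) * ∑ j, A i j * lam j)) →
        Sterm e A g r k lam a ℓ c = 0) ∧
    (¬ (∃ α : Polynomial Fq, ∀ i, g ∣ (c i - α * ∑ j, A i j * lam j)) →
      Sfull e A g r k lam c = 0) := by
  have hterm : ∀ a ℓ : Polynomial Fq,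
      ¬ (∀ i, g ∣ (c i - 2 * (a + r * ℓ) * ∑ j, A i j * lam j)) →
        Sterm e A g r k lam a ℓ c = 0 := by
    intro a ℓ h
    obtain ⟨i₀, hi₀⟩ := not_forall.mp h
    exact Sterm_eq_zero_of_not_dvd A g r k lam a ℓ c he hA hg hr (mt dvd_sub_comm.mp hi₀)
  refine ⟨hterm, fun h => Finset.sum_eq_zero fun ℓ _ => Finset.sum_eq_zero fun a _ => ?_⟩
  exact ite_eq_right_iff.mpr fun _ => hterm _ _ fun hall => h ⟨_, hall⟩

open FF in
/-- vanishing of `S_{g,r}(a,ℓ,c)`.  Unless `c ≡ 2(a+rℓ)Aλ (mod g)`,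
the sum `S_{g,r}(a,ℓ,c)` vanishes.  Consequently `S_{g,r}(c) = 0` unless
`c ≡ αAλ (mod g)` for some `α ∈ 𝔽_q[t]`. -/
theorem Sterm_vanishing {Fq : Type*} [Field Fq] [Fintype Fq]
    (hq : Odd (Fintype.card Fq)) (e : AddChar Fq ℂ) (he : e ≠ 1) {d : ℕ}
    (A : Matrix (Fin d) (Fin d) (Polynomial Fq)) (hA : A.IsSymm)
    (g r k : Polynomial Fq) (hg : g ≠ 0) (hr : r ≠ 0)
    (lam : Fin d → Polynomial Fq) (c : Fin d → Polynomial Fq) :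
    (∀ a ℓ : Polynomial Fq,
      ¬ (∀ i, g ∣ (c i - 2 * (a + r * ℓ) * ∑ j, A i j * lam j)) →
        Sterm e A g r k lam a ℓ c = 0) ∧
    (¬ (∃ α : Polynomial Fq, ∀ i, g ∣ (c i - α * ∑ j, A i j * lam j)) →
      Sfull e A g r k lam c = 0) :=
  Sterm_vanishing_general e he A hA g r k hg hr lam c
end
end
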